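/- arXiv:2307.07552 — 3 statements merged into one kernel-verified Lean document; each statement's English description precedes it below -/
import Mathlib

section
/- Let U be a unitary N×N complex matrix, L₀ an N×N complex matrix, and D a natural number. Then the Frobenius norm of the commutator of U with the Cesàro average L_D := (1/(D+1)) · Σ_{d=0}^{D} Uᵈ · L₀ · (U†)ᵈ satisfies ‖U·L_D − L_D·U‖_F ≤ (2/(D+1)) · ‖L₀‖_F. -/
open Matrix BigOperators

/-- Frobenius norm of a square complex matrix: `‖A‖_F = √(Tr(A†A))`. -/
noncomputable def frobNorm {n : Type*} [Fintype n] (A : Matrix n n ℂ) : ℝ :=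
  Real.sqrt (Matrix.trace (Aᴴ * A)).re

/-- Cesàro average `L_D = (1/(D+1)) ∑_{d=0}^{D} Uᵈ L₀ (U†)ᵈ`. -/
noncomputable def cesaroAvg {N : ℕ} (U L₀ : Matrix (Fin N) (Fin N) ℂ) (D : ℕ) :
    Matrix (Fin N) (Fin N) ℂ :=
  ((D : ℂ) + 1)⁻¹ • ∑ d ∈ Finset.range (D + 1), U ^ d * L₀ * (Uᴴ) ^ d

/-!
Conjugation by `U` shifts the sum `S = ∑_{d ≤ D} Uᵈ L₀ U†ᵈ` by one step, so `U S U† - S`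
telescopes to `U^{D+1} L₀ U†^{D+1} - L₀`, whose Frobenius norm is at most `2 ‖L₀‖_F` by unitary
invariance. Since `U L - L U = (U L U† - L) U`, the commutator of `U` with `L_D = S / (D+1)` has
norm at most `2 ‖L₀‖_F / (D+1)`.
-/

attribute [local instance] Matrix.frobeniusNormedAddCommGroup Matrix.frobeniusNormedSpace

theorem mul_sum_pow_mul_pow_mul_sub {R : Type*} [Ring R] (a b x : R) (n : ℕ) :
    a * (∑ d ∈ Finset.range n, a ^ d * x * b ^ d) * b - ∑ d ∈ Finset.range n, a ^ d * x * b ^ d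
      = a ^ n * x * b ^ n - x := by
  have htelescope := Finset.sum_range_sub (fun d => a ^ d * x * b ^ d) n
  simp only [pow_zero, one_mul, mul_one] at htelescope
  rw [Finset.mul_sum, Finset.sum_mul, ← Finset.sum_sub_distrib, ← htelescope]
  refine Finset.sum_congr rfl fun d _ => ?_
  rw [pow_succ' a, pow_succ b]
  noncomm_ring

theorem commutator_eq_conj_sub_mul {R : Type*} [Ring R] {a b : R} (h : b * a = 1) (x : R) :
    a * x - x * a = (a * x * b - x) * a := by
  rw [sub_mul, mul_assoc (a * x), h, mul_one]

namespace Matrix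

variable {𝕜 m n : Type*} [RCLike 𝕜] [Fintype m] [Fintype n]

theorem frobenius_norm_eq_sqrt_re_trace (A : Matrix m n 𝕜) :
    ‖A‖ = √(RCLike.re (trace (Aᴴ * A))) := by
  rw [frobenius_norm_def, Real.sqrt_eq_rpow, trace, map_sum, Finset.sum_comm]
  congr 1
  refine Finset.sum_congr rfl fun j _ => ?_
  simp only [diag_apply, mul_apply, conjTranspose_apply, map_sum, RCLike.star_def,
    RCLike.conj_mul]
  norm_cast

theorem frobenius_norm_mul_unitary [DecidableEq n] (A : Matrix m n 𝕜) {V : Matrix n n 𝕜}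
    (hV : V ∈ unitaryGroup n 𝕜) : ‖A * V‖ = ‖A‖ := by
  rw [frobenius_norm_eq_sqrt_re_trace, frobenius_norm_eq_sqrt_re_trace, conjTranspose_mul,
    show Vᴴ * Aᴴ * (A * V) = Vᴴ * (Aᴴ * A) * V by simp only [Matrix.mul_assoc], trace_mul_cycle,
    ← Matrix.mul_assoc, ← star_eq_conjTranspose, Unitary.mul_star_self_of_mem hV,
    Matrix.one_mul]

theorem frobenius_norm_unitary_mul [DecidableEq m] (A : Matrix m n 𝕜) {V : Matrix m m 𝕜}
    (hV : V ∈ unitaryGroup m 𝕜) : ‖V * A‖ = ‖A‖ := by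
  rw [frobenius_norm_eq_sqrt_re_trace, frobenius_norm_eq_sqrt_re_trace, conjTranspose_mul,
    Matrix.mul_assoc, ← Matrix.mul_assoc Vᴴ, ← star_eq_conjTranspose,
    Unitary.star_mul_self_of_mem hV, Matrix.one_mul]

theorem frobenius_norm_unitary_conj_sub_le [DecidableEq n] (A : Matrix n n 𝕜) {V : Matrix n n 𝕜}
    (hV : V ∈ unitaryGroup n 𝕜) : ‖V * A * Vᴴ - A‖ ≤ 2 * ‖A‖ := by
  have hconj : ‖V * A * Vᴴ‖ = ‖A‖ := by
    rw [← star_eq_conjTranspose, frobenius_norm_mul_unitary _ (Unitary.star_mem hV),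
      frobenius_norm_unitary_mul _ hV]
  linarith [norm_sub_le (V * A * Vᴴ) A]

end Matrix

theorem frobNorm_eq_norm {n : Type*} [Fintype n] (A : Matrix n n ℂ) : frobNorm A = ‖A‖ := by
  rw [frobenius_norm_eq_sqrt_re_trace, RCLike.re_to_complex, frobNorm]

theorem cesaro_average_commutator_norm_bound {N : ℕ}
    (U L₀ : Matrix (Fin N) (Fin N) ℂ) (hU : Uᴴ * U = 1) (D : ℕ) :
    frobNorm (U * cesaroAvg U L₀ D - cesaroAvg U L₀ D * U) ≤
      (2 / (D + 1)) * frobNorm L₀ := by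
  have hU_mem : U ∈ unitaryGroup (Fin N) ℂ := mem_unitaryGroup_iff'.mpr hU
  have hcomm : U * cesaroAvg U L₀ D - cesaroAvg U L₀ D * U =
      ((D : ℂ) + 1)⁻¹ • ((U ^ (D + 1) * L₀ * (U ^ (D + 1))ᴴ - L₀) * U) := by
    rw [cesaroAvg, mul_smul_comm, smul_mul_assoc, ← smul_sub, commutator_eq_conj_sub_mul hU,
      mul_sum_pow_mul_pow_mul_sub, conjTranspose_pow]
  have hscalar : ‖((D : ℂ) + 1)⁻¹‖ = ((D : ℝ) + 1)⁻¹ := by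
    rw [norm_inv]
    norm_cast
  rw [frobNorm_eq_norm, frobNorm_eq_norm, hcomm, norm_smul, hscalar,
    frobenius_norm_mul_unitary _ hU_mem]
  calc ((D : ℝ) + 1)⁻¹ * ‖U ^ (D + 1) * L₀ * (U ^ (D + 1))ᴴ - L₀‖
      ≤ ((D : ℝ) + 1)⁻¹ * (2 * ‖L₀‖) := by
        gcongr
        exact frobenius_norm_unitary_conj_sub_le L₀ (pow_mem hU_mem _)
    _ = 2 / (D + 1) * ‖L₀‖ := by ring
end

section
/- Let U be a unitary N×N complex matrix, L₀ a Hermitian N×N complex matrix, D a natural number, and λ a real number with λ > 0. Suppose that for every natural number d with 0 ≤ d ≤ D the memory condition Re Tr(Uᵈ · L₀ · (U†)ᵈ · L₀) ≥ λ · ‖L₀‖_F² holds. Then the Cesàro average L_D := (1/(D+1)) · Σ_{d=0}^{D} Uᵈ · L₀ · (U†)ᵈ satisfies the lower bound ‖L_D‖_F ≥ √λ · ‖L₀‖_F. -/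
open Matrix BigOperators

lemma aux_pow_cancel {N : ℕ} (U : Matrix (Fin N) (Fin N) ℂ)
    (hU : Uᴴ * U = 1) : ∀ k : ℕ, (Uᴴ)^k * U^k = 1 := by
  intro k
  induction k with
  | zero => simp
  | succ n ih =>
    rw [pow_succ Uᴴ, pow_succ' U]
    calc Uᴴ^n * Uᴴ * (U * U^n) = Uᴴ^n * (Uᴴ * U) * U^n := by
          simp only [mul_assoc]
      _ = 1 := by rw [hU, mul_one, ih]

lemma aux_trace {N : ℕ} (U L₀ : Matrix (Fin N) (Fin N) ℂ)
    (hU : Uᴴ * U = 1) {a b : ℕ} (hab : a ≤ b) :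
    Matrix.trace (U^a * L₀ * (Uᴴ)^a * (U^b * L₀ * (Uᴴ)^b)) =
    Matrix.trace (U^(b-a) * L₀ * (Uᴴ)^(b-a) * L₀) := by
  have hQP : (Uᴴ)^a * U^a = 1 := aux_pow_cancel U hU a
  have h1 : U^b = U^a * U^(b-a) := by rw [← pow_add]; congr 1; omega
  have h2 : (Uᴴ)^b = (Uᴴ)^(b-a) * (Uᴴ)^a := by rw [← pow_add]; congr 1; omega
  rw [h1, h2]
  rw [show U^a * L₀ * (Uᴴ)^a * (U^a * U^(b-a) * L₀ * ((Uᴴ)^(b-a) * (Uᴴ)^a))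
      = U^a * (L₀ * (U^(b-a) * (L₀ * ((Uᴴ)^(b-a) * (Uᴴ)^a)))) from by
    simp only [mul_assoc]
    rw [← mul_assoc ((Uᴴ)^a) (U^a), hQP, one_mul]]
  rw [trace_mul_comm]
  rw [show L₀ * (U^(b-a) * (L₀ * ((Uᴴ)^(b-a) * (Uᴴ)^a))) * U^a
      = L₀ * (U^(b-a) * (L₀ * (Uᴴ)^(b-a))) from by
    simp only [mul_assoc]
    rw [hQP, mul_one]]
  rw [trace_mul_comm]
  simp only [mul_assoc]

lemma term_bound {N : ℕ} (U L₀ : Matrix (Fin N) (Fin N) ℂ)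
    (hU : Uᴴ * U = 1) (hHerm : L₀.IsHermitian)
    (D : ℕ) (lam : ℝ)
    (hmem : ∀ d : ℕ, d ≤ D →
      lam * (frobNorm L₀) ^ 2 ≤ (Matrix.trace (U ^ d * L₀ * (Uᴴ) ^ d * L₀)).re)
    {a b : ℕ} (ha : a ≤ D) (hb : b ≤ D) :
    lam * (frobNorm L₀) ^ 2 ≤
      (Matrix.trace ((U^a * L₀ * (Uᴴ)^a)ᴴ * (U^b * L₀ * (Uᴴ)^b))).re := by
  have hM : (U^a * L₀ * (Uᴴ)^a)ᴴ = U^a * L₀ * (Uᴴ)^a := by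
    simp [conjTranspose_mul, conjTranspose_pow, hHerm.eq, mul_assoc]
  rw [hM]
  rcases le_total a b with h | h
  · rw [aux_trace U L₀ hU h]; exact hmem _ (by omega)
  · rw [trace_mul_comm, aux_trace U L₀ hU h]; exact hmem _ (by omega)

theorem cesaro_average_norm_lower_bound {N : ℕ}
    (U L₀ : Matrix (Fin N) (Fin N) ℂ)
    (hU : Uᴴ * U = 1) (hHerm : L₀.IsHermitian)
    (D : ℕ) (lam : ℝ) (hlam : 0 < lam)
    (hmem : ∀ d : ℕ, d ≤ D →
      lam * (frobNorm L₀) ^ 2 ≤ (Matrix.trace (U ^ d * L₀ * (Uᴴ) ^ d * L₀)).re) :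
    Real.sqrt lam * frobNorm L₀ ≤ frobNorm (cesaroAvg U L₀ D) := by
  set S : Matrix (Fin N) (Fin N) ℂ :=
    ∑ d ∈ Finset.range (D + 1), U ^ d * L₀ * (Uᴴ) ^ d with hS
  have hn : (0:ℝ) < (D:ℝ) + 1 := by positivity
  -- trace of Sᴴ * S expanded
  have hsum : ((D:ℝ)+1)^2 * (lam * (frobNorm L₀)^2) ≤ (Matrix.trace (Sᴴ * S)).re := by
    rw [hS, conjTranspose_sum, Finset.sum_mul_sum]
    rw [trace_sum]
    have : (∑ a ∈ Finset.range (D+1), Matrix.trace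
        (∑ b ∈ Finset.range (D+1), (U^a * L₀ * (Uᴴ)^a)ᴴ * (U^b * L₀ * (Uᴴ)^b))).re
        = ∑ a ∈ Finset.range (D+1), ∑ b ∈ Finset.range (D+1),
          (Matrix.trace ((U^a * L₀ * (Uᴴ)^a)ᴴ * (U^b * L₀ * (Uᴴ)^b))).re := by
      simp [trace_sum, Complex.re_sum]
    rw [show ((D:ℝ)+1)^2 * (lam * (frobNorm L₀)^2)
        = ∑ _a ∈ Finset.range (D+1), ∑ _b ∈ Finset.range (D+1),
            lam * (frobNorm L₀)^2 from by
      simp [Finset.sum_const, Finset.card_range]; ring]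
    rw [this]
    refine Finset.sum_le_sum fun a hamem => Finset.sum_le_sum fun b hbmem => ?_
    exact term_bound U L₀ hU hHerm D lam hmem
      (by simpa using Nat.lt_succ_iff.mp (Finset.mem_range.mp hamem))
      (by simpa using Nat.lt_succ_iff.mp (Finset.mem_range.mp hbmem))
  -- trace of L_Dᴴ L_D
  have hLD : (Matrix.trace ((cesaroAvg U L₀ D)ᴴ * cesaroAvg U L₀ D)).re
      = (((D:ℝ)+1)^2)⁻¹ * (Matrix.trace (Sᴴ * S)).re := by
    rw [cesaroAvg, ← hS]
    rw [conjTranspose_smul, smul_mul_assoc, mul_smul_comm, trace_smul, trace_smul]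
    rw [smul_smul, smul_eq_mul]
    have : star (((D:ℂ)+1)⁻¹) * ((D:ℂ)+1)⁻¹ = ((((D:ℝ)+1)^2)⁻¹ : ℝ) := by
      simp [Complex.star_def]
      rw [sq, mul_inv]
    rw [this, Complex.re_ofReal_mul]
  have key : lam * (frobNorm L₀)^2
      ≤ (Matrix.trace ((cesaroAvg U L₀ D)ᴴ * cesaroAvg U L₀ D)).re := by
    rw [hLD]
    calc lam * (frobNorm L₀)^2
        = (((D:ℝ)+1)^2)⁻¹ * (((D:ℝ)+1)^2 * (lam * (frobNorm L₀)^2)) := by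
          field_simp
      _ ≤ _ := by
          apply mul_le_mul_of_nonneg_left hsum (by positivity)
  calc Real.sqrt lam * frobNorm L₀
      = Real.sqrt (lam * (frobNorm L₀)^2) := by
        rw [Real.sqrt_mul hlam.le, Real.sqrt_sq (show (0:ℝ) ≤ frobNorm L₀ from Real.sqrt_nonneg _)]
  _ ≤ frobNorm (cesaroAvg U L₀ D) := Real.sqrt_le_sqrt key
end

section
/- For all real numbers θ and φ, define the two 4×4 complex matrices A := CZ · (U(θ) ⊗ₖ I₂) · (Z ⊗ₖ I₂) · (U(θ) ⊗ₖ I₂) · CZ and B := ((P(φ) ⊗ₖ I₂))† · (U(θ) ⊗ₖ I₂) · (Z ⊗ₖ I₂) · (U(θ) ⊗ₖ I₂) · (P(φ) ⊗ₖ I₂). Then ‖A − B‖_F = 2·√2·|sin θ|, and consequently the imprecision of the initial-guess operator Z ⊗ₖ I₂ equals ‖A − B‖_F / (2·‖Z ⊗ₖ I₂‖_F) = |sin θ|/√2, independent of the disorder angle φ. -/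
open Matrix Kronecker

/-- The Pauli Z matrix. -/
def PauliZ : Matrix (Fin 2) (Fin 2) ℂ := !![1, 0; 0, -1]

/-- The kick gate `U(θ)`. -/
noncomputable def kickGate (θ : ℝ) : Matrix (Fin 2) (Fin 2) ℂ :=
  !![(Real.cos (θ / 2) : ℂ), (Real.sin (θ / 2) : ℂ);
     (Real.sin (θ / 2) : ℂ), (-Real.cos (θ / 2) : ℂ)]

/-- The disorder gate `P(φ)`. -/
noncomputable def disorderGate (φ : ℝ) : Matrix (Fin 2) (Fin 2) ℂ :=
  !![1, 0; 0, Complex.exp (Complex.I * φ)]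

/-- The controlled-Z gate: the diagonal matrix `diag(1, 1, 1, -1)` on two qubits,
indexed by `Fin 2 × Fin 2` in the standard ordering `(0,0), (0,1), (1,0), (1,1)`. -/
def CZgate : Matrix (Fin 2 × Fin 2) (Fin 2 × Fin 2) ℂ :=
  Matrix.diagonal (fun p => if p.1 = 1 ∧ p.2 = 1 then -1 else 1)

/-
After merging the Kronecker factors, `U(θ) Z U(θ)` is the reflection
`V = !![cos θ, sin θ; sin θ, -cos θ]`, and both `A` and `B` are conjugations of `V ⊗ₖ I₂` by
diagonal matrices, which rescale its entries. The diagonal entries of `V` are untouched by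
both conjugations, so only the four off-diagonal `sin θ` entries survive in `A - B`, with factors
`1 - z` and `-1 - z` (or their conjugates) where `z = exp(iφ)`. Since `|z| = 1`, the parallelogram
law gives `|1 - z|² + |1 + z|² = 4`, hence `‖A - B‖_F² = 8 sin² θ` whatever `φ` is.
-/

open ComplexConjugate

section FrobeniusNorm

variable {n : Type*} [Fintype n]

lemma re_trace_conjTranspose_mul_self (A : Matrix n n ℂ) :
    (Aᴴ * A).trace.re = ∑ i, ∑ j, ‖A i j‖ ^ 2 := by
  simp only [trace, diag_apply, mul_apply, conjTranspose_apply, Complex.re_sum]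
  rw [Finset.sum_comm]
  simp [← Complex.normSq_eq_norm_sq, Complex.normSq_apply]

lemma frobNorm_eq_sqrt_sum_norm_sq (A : Matrix n n ℂ) :
    frobNorm A = √(∑ i, ∑ j, ‖A i j‖ ^ 2) := by
  rw [frobNorm, re_trace_conjTranspose_mul_self]

end FrobeniusNorm

lemma mul_kronecker_one_mul_kronecker_one_mul_kronecker_one {l m R : Type*} [Fintype l]
    [Fintype m] [DecidableEq m] [CommSemiring R] (M N : Matrix (l × m) (l × m) R)
    (X Y W : Matrix l l R) :
    M * (X ⊗ₖ (1 : Matrix m m R)) * (Y ⊗ₖ 1) * (W ⊗ₖ 1) * N = M * ((X * Y * W) ⊗ₖ 1) * N := by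
  rw [mul_assoc M, ← mul_kronecker_mul, mul_assoc M, ← mul_kronecker_mul, one_mul, one_mul]

lemma diagonal_mul_mul_diagonal_apply {n α : Type*} [Fintype n] [DecidableEq n]
    [NonUnitalNonAssocSemiring α] (d e : n → α) (M : Matrix n n α) (i j : n) :
    (diagonal d * M * diagonal e) i j = d i * M i j * e j := by
  rw [mul_diagonal, diagonal_mul]

lemma norm_one_sub_sq_add_norm_one_add_sq {z : ℂ} (hz : ‖z‖ = 1) :
    ‖1 - z‖ ^ 2 + ‖1 + z‖ ^ 2 = 4 := by
  have h := parallelogram_law_with_norm ℝ (1 : ℂ) z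
  rw [norm_one, hz] at h
  linarith

noncomputable def reflectionMatrix (α : ℝ) : Matrix (Fin 2) (Fin 2) ℂ :=
  !![(Real.cos α : ℂ), (Real.sin α : ℂ); (Real.sin α : ℂ), (-Real.cos α : ℂ)]

lemma reflectionMatrix_mul_pauliZ_mul_reflectionMatrix (α : ℝ) :
    reflectionMatrix α * PauliZ * reflectionMatrix α = reflectionMatrix (2 * α) := by
  ext i j
  fin_cases i <;> fin_cases j <;>
    simp [reflectionMatrix, PauliZ, mul_apply, Fin.sum_univ_two, Complex.sin_two_mul,
      Complex.cos_two_mul'] <;> ring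

lemma kickGate_mul_pauliZ_mul_kickGate (θ : ℝ) :
    kickGate θ * PauliZ * kickGate θ = reflectionMatrix θ := by
  rw [show kickGate θ = reflectionMatrix (θ / 2) from rfl,
    reflectionMatrix_mul_pauliZ_mul_reflectionMatrix, mul_div_cancel₀ θ two_ne_zero]

lemma disorderGate_kronecker_one (φ : ℝ) :
    disorderGate φ ⊗ₖ (1 : Matrix (Fin 2) (Fin 2) ℂ) =
      diagonal (fun p => ![1, Complex.exp (Complex.I * φ)] p.1) := by
  have hP : disorderGate φ = diagonal ![1, Complex.exp (Complex.I * φ)] := by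
    ext i j; fin_cases i <;> fin_cases j <;> rfl
  rw [hP, ← diagonal_one, diagonal_kronecker_diagonal]
  simp

lemma sum_norm_sq_CZgate_conj_sub_diagonal_conj (θ : ℝ) {z : ℂ} (hz : ‖z‖ = 1) :
    let P : Matrix (Fin 2 × Fin 2) (Fin 2 × Fin 2) ℂ := diagonal (fun p => ![1, z] p.1)
    let V := reflectionMatrix θ ⊗ₖ (1 : Matrix (Fin 2) (Fin 2) ℂ)
    ∑ i, ∑ j, ‖(CZgate * V * CZgate - Pᴴ * V * P) i j‖ ^ 2 = 8 * Real.sin θ ^ 2 := by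
  intro P V
  simp only [P, V, diagonal_conjTranspose, CZgate, Matrix.sub_apply,
    diagonal_mul_mul_diagonal_apply, Fintype.sum_prod_type, Fin.sum_univ_two, reflectionMatrix,
    Fin.isValue, zero_ne_one, ↓reduceIte, Complex.ofReal_cos, Complex.ofReal_sin,
    kroneckerMap_apply, of_apply, cons_val', cons_val_zero, cons_val_fin_one, cons_val_one,
    one_apply_eq, one_apply_ne, mul_one, one_mul, Nat.succ_eq_add_one, Nat.reduceAdd,
    Pi.star_apply, sub_self, norm_zero, ne_eq, OfNat.ofNat_ne_zero, not_false_eq_true, zero_pow,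
    mul_zero, and_true, and_false, add_zero, mul_neg, neg_zero, zero_mul, zero_add, one_ne_zero,
    RCLike.star_def, map_one, neg_mul, sub_neg_eq_add, neg_neg]
  set s := Complex.sin θ with hs_def
  have hzz : conj z * z = 1 := by rw [Complex.conj_mul', hz]; simp
  have hs : ‖s‖ = |Real.sin θ| := by
    rw [hs_def, ← Complex.ofReal_sin, Complex.norm_real, Real.norm_eq_abs]
  rw [show s - s * z = s * (1 - z) by ring, show -s - s * z = -s * (1 + z) by ring,
    show s - conj z * s = s * conj (1 - z) by simp; ring,
    show -s - conj z * s = -s * conj (1 + z) by simp; ring,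
    show -Complex.cos θ + conj z * Complex.cos θ * z = 0 by linear_combination Complex.cos θ * hzz]
  simp only [norm_mul, norm_neg, Complex.norm_conj, hs, norm_zero, mul_pow, sq_abs]
  linear_combination (2 * Real.sin θ ^ 2) * norm_one_sub_sq_add_norm_one_add_sq hz

lemma frobNorm_pauliZ_kronecker_one :
    frobNorm (PauliZ ⊗ₖ (1 : Matrix (Fin 2) (Fin 2) ℂ)) = 2 := by
  rw [frobNorm_eq_sqrt_sum_norm_sq, show (2 : ℝ) = √(2 ^ 2) by simp]
  norm_num [Fintype.sum_prod_type, Fin.sum_univ_two, PauliZ, one_apply]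

theorem initial_guess_imprecision (θ φ : ℝ) :
    let A := CZgate * (kickGate θ ⊗ₖ (1 : Matrix (Fin 2) (Fin 2) ℂ)) *
        (PauliZ ⊗ₖ (1 : Matrix (Fin 2) (Fin 2) ℂ)) *
        (kickGate θ ⊗ₖ (1 : Matrix (Fin 2) (Fin 2) ℂ)) * CZgate
    let B := (disorderGate φ ⊗ₖ (1 : Matrix (Fin 2) (Fin 2) ℂ))ᴴ *
        (kickGate θ ⊗ₖ (1 : Matrix (Fin 2) (Fin 2) ℂ)) *
        (PauliZ ⊗ₖ (1 : Matrix (Fin 2) (Fin 2) ℂ)) *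
        (kickGate θ ⊗ₖ (1 : Matrix (Fin 2) (Fin 2) ℂ)) *
        (disorderGate φ ⊗ₖ (1 : Matrix (Fin 2) (Fin 2) ℂ))
    frobNorm (A - B) = 2 * Real.sqrt 2 * |Real.sin θ| ∧
    frobNorm (A - B) / (2 * frobNorm (PauliZ ⊗ₖ (1 : Matrix (Fin 2) (Fin 2) ℂ))) =
      |Real.sin θ| / Real.sqrt 2 := by
  intro A B
  have hsum := sum_norm_sq_CZgate_conj_sub_diagonal_conj θ (Complex.norm_exp_I_mul_ofReal φ)
  simp only [← disorderGate_kronecker_one, ← kickGate_mul_pauliZ_mul_kickGate,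
    ← mul_kronecker_one_mul_kronecker_one_mul_kronecker_one] at hsum
  have hAB : frobNorm (A - B) = 2 * √2 * |Real.sin θ| := by
    rw [frobNorm_eq_sqrt_sum_norm_sq, hsum, show (8 : ℝ) = (2 * √2) ^ 2 by norm_num [mul_pow],
      ← mul_pow, Real.sqrt_sq_eq_abs, abs_mul, abs_of_pos (by positivity)]
  refine ⟨hAB, ?_⟩
  rw [hAB, frobNorm_pauliZ_kronecker_one]
  field_simp
  norm_num
end
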